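/- arXiv:1709.09561 — 2 statements merged into one kernel-verified Lean document; each statement's English description precedes it below -/
import Mathlib

section
/- Let B be an N×N nonnegative real matrix such that B = K^n for some positive integer n and some inverse M-matrix K. Then B is strongly infinitely divisible: det(B) > 0 and for every positive integer m there exists a nonnegative matrix R with R^m = B. -/
open Matrix

/-- A real square matrix is (entrywise) nonnegative if all of its entries are nonnegative. -/
def IsNonnegMatrix {ι : Type*} (B : Matrix ι ι ℝ) : Prop :=
  ∀ i j, 0 ≤ B i j

/-- A Z-matrix is a real square matrix all of whose off-diagonal entries are nonpositive. -/
def IsZMatrix {ι : Type*} (Q : Matrix ι ι ℝ) : Prop :=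
  ∀ i j, i ≠ j → Q i j ≤ 0

/-- A nonnegative matrix `B` is infinitely divisible if for every positive integer `n`
there exists a nonnegative matrix `K` with `K ^ n = B`. -/
def IsInfinitelyDivisible {ι : Type*} [Fintype ι] [DecidableEq ι] (B : Matrix ι ι ℝ) : Prop :=
  ∀ n : ℕ, 0 < n → ∃ K : Matrix ι ι ℝ, IsNonnegMatrix K ∧ K ^ n = B

/-- `B` is strongly infinitely divisible if it is infinitely divisible and `det B > 0`. -/
def IsStronglyInfinitelyDivisible {ι : Type*} [Fintype ι] [DecidableEq ι]
    (B : Matrix ι ι ℝ) : Prop :=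
  IsInfinitelyDivisible B ∧ 0 < B.det

/-- An inverse M-matrix is an invertible nonnegative matrix whose inverse is a Z-matrix. -/
def IsInverseMMatrix {ι : Type*} [Fintype ι] [DecidableEq ι] (K : Matrix ι ι ℝ) : Prop :=
  IsUnit K.det ∧ IsNonnegMatrix K ∧ IsZMatrix K⁻¹

/-- A stochastic matrix is a nonnegative square matrix each of whose rows sums to `1`. -/
def IsStochasticMatrix {ι : Type*} [Fintype ι] (P : Matrix ι ι ℝ) : Prop :=
  IsNonnegMatrix P ∧ ∀ i, ∑ j, P i j = 1

/-- An intensity matrix is a real square matrix whose off-diagonal entries are nonnegative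
and each of whose rows sums to `0`. -/
def IsIntensityMatrix {ι : Type*} [Fintype ι] (R : Matrix ι ι ℝ) : Prop :=
  (∀ i j, i ≠ j → 0 ≤ R i j) ∧ ∀ i, ∑ j, R i j = 0

/-!
An inverse M-matrix `K` satisfies `K⁻¹ = s • (1 - Q)` with `s > 0` and `Q` entrywise
nonnegative, and the Neumann series `∑ Qᵏ` converges to `s • K`. For `0 ≤ α ≤ 1` the binomial
series `(1 - Q) ^ (-α) = ∑ multichoose α k • Qᵏ` has coefficients in `[0, 1]`, so it converges
to a nonnegative matrix, and the Chu–Vandermonde identity gives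
`(1 - Q) ^ (-(α + β)) = (1 - Q) ^ (-α) * (1 - Q) ^ (-β)`. Hence `s ^ (-1/m) • (1 - Q) ^ (-1/m)`
is a nonnegative `m`-th root of `K`, and its `n`-th power one of `Kⁿ`. Finally `det Kⁿ ≠ 0` is
the square of the determinant of a square root of `Kⁿ`, hence positive.
-/

open Finset Filter

theorem ascPochhammer_eval_nonneg {S : Type*} [Semiring S] [PartialOrder S] [IsOrderedRing S]
    {a : S} (ha : 0 ≤ a) : ∀ k, 0 ≤ (ascPochhammer S k).eval a
  | 0 => by simp
  | k + 1 => by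
    rw [ascPochhammer_succ_eval]
    exact mul_nonneg (ascPochhammer_eval_nonneg ha k) (by positivity)

-- Chu–Vandermonde at `-r` and `-s`, since `choose (-r) k = (-1) ^ k • multichoose r k`.
theorem multichoose_add {R : Type*} [CommRing R] [BinomialRing R] (r s : R) (k : ℕ) :
    Ring.multichoose (r + s) k =
      ∑ ij ∈ antidiagonal k, Ring.multichoose r ij.1 * Ring.multichoose s ij.2 := by
  have h := Ring.add_choose_eq (r := -r) (s := -s) k (Commute.all _ _)
  rw [← neg_add, Ring.choose_neg'] at h
  have hsign : ∀ ij ∈ antidiagonal k, Ring.choose (-r) ij.1 * Ring.choose (-s) ij.2 =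
      Int.negOnePow k • (Ring.multichoose r ij.1 * Ring.multichoose s ij.2) := by
    intro ij hij
    rw [← mem_antidiagonal.mp hij, Ring.choose_neg', Ring.choose_neg', smul_mul_smul_comm,
      Nat.cast_add, Int.negOnePow_add]
  rw [sum_congr rfl hsign, ← smul_sum] at h
  exact (smul_left_cancel_iff _).mp h

theorem Real.multichoose_nonneg {α : ℝ} (hα : 0 ≤ α) (k : ℕ) : 0 ≤ Ring.multichoose α k := by
  have h := Ring.factorial_nsmul_multichoose_eq_ascPochhammer α k
  rw [Polynomial.ascPochhammer_smeval_eq_eval, nsmul_eq_mul] at h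
  exact nonneg_of_mul_nonneg_right (h ▸ ascPochhammer_eval_nonneg hα k)
    (Nat.cast_pos.2 k.factorial_pos)

theorem Real.multichoose_le_one {α : ℝ} (hα₀ : 0 ≤ α) (hα₁ : α ≤ 1) (k : ℕ) :
    Ring.multichoose α k ≤ 1 := by
  have h := multichoose_add α (1 - α) k
  rw [add_sub_cancel, Ring.multichoose_one] at h
  calc Ring.multichoose α k
        = Ring.multichoose α (k, 0).1 * Ring.multichoose (1 - α) (k, 0).2 := by
          rw [Ring.multichoose_zero_right, mul_one]
    _ ≤ ∑ ij ∈ antidiagonal k, Ring.multichoose α ij.1 * Ring.multichoose (1 - α) ij.2 :=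
        single_le_sum (fun ij _ => mul_nonneg (multichoose_nonneg hα₀ _)
          (multichoose_nonneg (sub_nonneg.2 hα₁) _)) (mem_antidiagonal.2 (add_zero k))
    _ = 1 := h.symm

variable {ι : Type*}

namespace IsNonnegMatrix

variable {A B : Matrix ι ι ℝ}

theorem one [DecidableEq ι] : IsNonnegMatrix (1 : Matrix ι ι ℝ) := fun i j => by
  rw [one_apply]; split_ifs <;> norm_num

theorem mul [Fintype ι] (hA : IsNonnegMatrix A) (hB : IsNonnegMatrix B) :
    IsNonnegMatrix (A * B) :=
  fun i j => sum_nonneg fun l _ => mul_nonneg (hA i l) (hB l j)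

theorem pow [Fintype ι] [DecidableEq ι] (hA : IsNonnegMatrix A) :
    ∀ n : ℕ, IsNonnegMatrix (A ^ n)
  | 0 => by rw [pow_zero]; exact one
  | n + 1 => by rw [pow_succ]; exact (hA.pow n).mul hA

theorem smul {c : ℝ} (hc : 0 ≤ c) (hA : IsNonnegMatrix A) : IsNonnegMatrix (c • A) :=
  fun i j => mul_nonneg hc (hA i j)

end IsNonnegMatrix

theorem Matrix.summable_of_nonneg_of_le {β : Type*} {f g : β → Matrix ι ι ℝ}
    (hf : ∀ b, IsNonnegMatrix (f b)) (hfg : ∀ b i j, f b i j ≤ g b i j) (hg : Summable g) :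
    Summable f :=
  Pi.summable.2 fun i => Pi.summable.2 fun j =>
    (Pi.summable.1 (Pi.summable.1 hg i) j).of_nonneg_of_le (fun b => hf b i j)
      (fun b => hfg b i j)

theorem Matrix.summable_mul_prod_of_nonneg [Fintype ι] {β γ : Type*} {f : β → Matrix ι ι ℝ}
    {g : γ → Matrix ι ι ℝ} (hf₀ : ∀ b, IsNonnegMatrix (f b)) (hg₀ : ∀ c, IsNonnegMatrix (g c))
    (hf : Summable f) (hg : Summable g) : Summable fun x : β × γ => f x.1 * g x.2 :=
  Pi.summable.2 fun i => Pi.summable.2 fun j => by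
    simp only [mul_apply]
    exact summable_sum fun l _ => (Pi.summable.1 (Pi.summable.1 hf i) l).mul_of_nonneg
      (Pi.summable.1 (Pi.summable.1 hg l) j) (fun b => hf₀ b i l) (fun c => hg₀ c l j)

theorem Matrix.hasSum_pow_of_one_sub_mul_eq_one [Fintype ι] [DecidableEq ι]
    {Q P : Matrix ι ι ℝ} (hQ : IsNonnegMatrix Q) (hP : IsNonnegMatrix P) (h : (1 - Q) * P = 1) :
    HasSum (Q ^ ·) P := by
  have partial_sum (M : ℕ) : ∑ k ∈ range M, Q ^ k = P - Q ^ M * P :=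
    calc ∑ k ∈ range M, Q ^ k = (∑ k ∈ range M, Q ^ k) * ((1 - Q) * P) := by
          rw [h, mul_one]
      _ = (1 - Q ^ M) * P := by rw [← mul_assoc, geom_sum_mul_neg]
      _ = P - Q ^ M * P := by rw [sub_mul, one_mul]
  have hsum : Summable (Q ^ ·) := Pi.summable.2 fun i => Pi.summable.2 fun j =>
    summable_of_sum_range_le (c := P i j) (fun k => hQ.pow k i j) fun M => by
      rw [← Matrix.sum_apply, partial_sum, sub_apply]
      exact sub_le_self _ ((hQ.pow M).mul hP i j)
  rw [hsum.hasSum_iff_tendsto_nat]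
  simpa [partial_sum] using tendsto_const_nhds.sub (hsum.tendsto_atTop_zero.mul_const P)

section NegBinomialSeries

variable [Fintype ι] [DecidableEq ι]

/-- The matrix `(1 - Q) ^ (-α)`, defined by its binomial series (junk `0` where that
diverges). -/
noncomputable def negBinomialSeries (Q : Matrix ι ι ℝ) (α : ℝ) : Matrix ι ι ℝ :=
  ∑' k, Ring.multichoose α k • Q ^ k

variable {Q : Matrix ι ι ℝ} {α β : ℝ}

theorem negBinomialSeries_zero (Q : Matrix ι ι ℝ) : negBinomialSeries Q 0 = 1 := by
  rw [negBinomialSeries, tsum_eq_single 0 fun k hk => ?_]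
  · rw [Ring.multichoose_zero_right, pow_zero, one_smul]
  · obtain ⟨k, rfl⟩ := Nat.exists_eq_succ_of_ne_zero hk
    rw [Ring.multichoose_zero_succ, zero_smul]

theorem negBinomialSeries_one {P : Matrix ι ι ℝ} (h : HasSum (Q ^ ·) P) :
    negBinomialSeries Q 1 = P := by
  simpa only [negBinomialSeries, Ring.multichoose_one, one_smul] using h.tsum_eq

theorem summable_multichoose_smul_pow (hQ : IsNonnegMatrix Q) (hsum : Summable (Q ^ ·))
    (hα₀ : 0 ≤ α) (hα₁ : α ≤ 1) : Summable fun k => Ring.multichoose α k • Q ^ k :=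
  summable_of_nonneg_of_le (fun k => (hQ.pow k).smul (Real.multichoose_nonneg hα₀ k))
    (fun k i j => mul_le_of_le_one_left (hQ.pow k i j) (Real.multichoose_le_one hα₀ hα₁ k))
    hsum

theorem isNonnegMatrix_negBinomialSeries (hQ : IsNonnegMatrix Q) (hsum : Summable (Q ^ ·))
    (hα₀ : 0 ≤ α) (hα₁ : α ≤ 1) : IsNonnegMatrix (negBinomialSeries Q α) := fun i j => by
  have hs := summable_multichoose_smul_pow hQ hsum hα₀ hα₁
  exact (Pi.hasSum.1 (Pi.hasSum.1 hs.hasSum i) j).nonneg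
    fun k => (hQ.pow k).smul (Real.multichoose_nonneg hα₀ k) i j

theorem negBinomialSeries_add (hQ : IsNonnegMatrix Q) (hsum : Summable (Q ^ ·)) (hα : 0 ≤ α)
    (hβ : 0 ≤ β) (hαβ : α + β ≤ 1) :
    negBinomialSeries Q (α + β) = negBinomialSeries Q α * negBinomialSeries Q β := by
  have nonneg {γ : ℝ} (hγ : 0 ≤ γ) (k : ℕ) : IsNonnegMatrix (Ring.multichoose γ k • Q ^ k) :=
    (hQ.pow k).smul (Real.multichoose_nonneg hγ k)
  have hsα := summable_multichoose_smul_pow hQ hsum hα (by linarith)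
  have hsβ := summable_multichoose_smul_pow hQ hsum hβ (by linarith)
  have hprod := summable_mul_prod_of_nonneg (nonneg hα) (nonneg hβ) hsα hsβ
  simp only [negBinomialSeries]
  rw [hsα.tsum_mul_tsum_eq_tsum_sum_antidiagonal hsβ hprod]
  refine tsum_congr fun n => ?_
  rw [multichoose_add, sum_smul]
  refine sum_congr rfl fun kl hkl => ?_
  rw [smul_mul_smul_comm, ← pow_add, mem_antidiagonal.1 hkl]

theorem negBinomialSeries_one_div_pow (hQ : IsNonnegMatrix Q) (hsum : Summable (Q ^ ·))
    {m k : ℕ} (hk : k ≤ m) :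
    negBinomialSeries Q (1 / m) ^ k = negBinomialSeries Q (k / m) := by
  induction k with
  | zero => rw [pow_zero, Nat.cast_zero, zero_div, negBinomialSeries_zero]
  | succ k ih =>
    have hkm : ((k + 1 : ℕ) : ℝ) / m ≤ 1 :=
      div_le_one_of_le₀ (by exact_mod_cast hk) m.cast_nonneg
    rw [pow_succ, ih (by omega),
      ← negBinomialSeries_add hQ hsum (by positivity) (by positivity), ← add_div, Nat.cast_succ]
    rwa [← add_div, ← Nat.cast_succ]

theorem isInfinitelyDivisible_of_hasSum_pow {Q K : Matrix ι ι ℝ} {s : ℝ} (hs : 0 < s)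
    (hQ : IsNonnegMatrix Q) (hK : HasSum (Q ^ ·) (s • K)) : IsInfinitelyDivisible K := by
  intro m hm
  have hm₀ : (m : ℝ) ≠ 0 := Nat.cast_ne_zero.2 hm.ne'
  refine ⟨(s ^ (m⁻¹ : ℝ))⁻¹ • negBinomialSeries Q (1 / m),
    (isNonnegMatrix_negBinomialSeries hQ hK.summable (by positivity)
      (div_le_one_of_le₀ (by exact_mod_cast hm) m.cast_nonneg)).smul (by positivity), ?_⟩
  rw [smul_pow, inv_pow, Real.rpow_inv_natCast_pow hs.le hm.ne',
    negBinomialSeries_one_div_pow hQ hK.summable le_rfl, div_self hm₀,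
    negBinomialSeries_one hK, inv_smul_smul₀ hs.ne']

end NegBinomialSeries

theorem IsZMatrix.exists_eq_smul_one_sub [Fintype ι] [DecidableEq ι] {A : Matrix ι ι ℝ}
    (hA : IsZMatrix A) : ∃ s > (0 : ℝ), ∃ Q, IsNonnegMatrix Q ∧ A = s • (1 - Q) := by
  set s := 1 + ∑ i, |A i i|
  have hs : 0 < s := by positivity
  have hdiag (i : ι) : A i i ≤ s := by
    calc A i i ≤ |A i i| := le_abs_self _
      _ ≤ ∑ l, |A l l| := single_le_sum (fun l _ => abs_nonneg (A l l)) (mem_univ i)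
      _ ≤ s := le_add_of_nonneg_left zero_le_one
  refine ⟨s, hs, 1 - s⁻¹ • A, fun i j => ?_, by rw [sub_sub_cancel, smul_inv_smul₀ hs.ne']⟩
  rw [Matrix.sub_apply, Matrix.smul_apply, smul_eq_mul, one_apply]
  split_ifs with hij
  · subst hij
    rw [sub_nonneg, inv_mul_le_one₀ hs]
    exact hdiag i
  · exact sub_nonneg.2 (mul_nonpos_of_nonneg_of_nonpos (inv_nonneg.2 hs.le) (hA i j hij))

theorem IsInverseMMatrix.isInfinitelyDivisible [Fintype ι] [DecidableEq ι]
    {K : Matrix ι ι ℝ} (hK : IsInverseMMatrix K) : IsInfinitelyDivisible K := by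
  obtain ⟨hdet, hK₀, hZ⟩ := hK
  obtain ⟨s, hs, Q, hQ, hKinv⟩ := hZ.exists_eq_smul_one_sub
  refine isInfinitelyDivisible_of_hasSum_pow hs hQ
    (hasSum_pow_of_one_sub_mul_eq_one hQ (hK₀.smul hs.le) ?_)
  rw [Matrix.mul_smul, ← Matrix.smul_mul, ← hKinv, nonsing_inv_mul K hdet]

theorem IsInfinitelyDivisible.pow [Fintype ι] [DecidableEq ι] {A : Matrix ι ι ℝ}
    (hA : IsInfinitelyDivisible A) (n : ℕ) : IsInfinitelyDivisible (A ^ n) := fun m hm => by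
  obtain ⟨R, hR, hRm⟩ := hA m hm
  exact ⟨R ^ n, hR.pow n, by rw [← pow_mul, mul_comm, pow_mul, hRm]⟩

theorem IsInfinitelyDivisible.isStronglyInfinitelyDivisible [Fintype ι] [DecidableEq ι]
    {A : Matrix ι ι ℝ} (hA : IsInfinitelyDivisible A) (hdet : A.det ≠ 0) :
    IsStronglyInfinitelyDivisible A := by
  obtain ⟨R, -, hR⟩ := hA 2 two_pos
  refine ⟨hA, ?_⟩
  rw [← hR, det_pow] at hdet ⊢
  exact (sq_nonneg _).lt_of_ne' hdet

theorem stmt4_general (N : ℕ) (B : Matrix (Fin N) (Fin N) ℝ)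
    (n : ℕ) (K : Matrix (Fin N) (Fin N) ℝ) (hK : IsInverseMMatrix K)
    (hBK : B = K ^ n) :
    IsStronglyInfinitelyDivisible B := by
  subst hBK
  exact (hK.isInfinitelyDivisible.pow n).isStronglyInfinitelyDivisible
    (by rw [det_pow]; exact pow_ne_zero n hK.1.ne_zero)

theorem stmt4 (N : ℕ) (B : Matrix (Fin N) (Fin N) ℝ) (hBnn : IsNonnegMatrix B)
    (n : ℕ) (hn : 0 < n) (K : Matrix (Fin N) (Fin N) ℝ) (hK : IsInverseMMatrix K)
    (hBK : B = K ^ n) :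
    IsStronglyInfinitelyDivisible B :=
  stmt4_general N B n K hK hBK
end

section
/- Let B be an N×N strongly infinitely divisible nonnegative matrix and Q a Z-matrix with exp(−Q) = B. If i ≠ j and B_{ij} = 0, then (exp(−tQ))_{ij} = 0 for every real number t. -/
open Matrix

/-!
Shift `Q` by a multiple of the identity: `M = s • 1 - Q` is nonnegative for `s` large, and
`exp (-(t • Q)) = exp (-t s) • exp (t • M)`. Every term of the exponential series of the
nonnegative matrix `M` is nonnegative, so `(exp M) i j = 0` forces `(M ^ n) i j = 0` for all `n`,
and then every term of the series of `exp (t • M)` vanishes at `(i, j)`.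
-/

open NormedSpace Nat

section

variable {ι : Type*} [Fintype ι] [DecidableEq ι]

theorem IsNonnegMatrix.pow_s10 {M : Matrix ι ι ℝ} (hM : IsNonnegMatrix M) :
    ∀ n : ℕ, IsNonnegMatrix (M ^ n)
  | 0 => fun i j => by rw [pow_zero, one_apply]; split_ifs <;> norm_num
  | n + 1 => fun i j => by
    rw [pow_succ, mul_apply]
    exact Finset.sum_nonneg fun k _ => mul_nonneg (hM.pow_s10 n i k) (hM k j)

theorem IsZMatrix.exists_isNonnegMatrix_smul_one_sub {Q : Matrix ι ι ℝ} (hQ : IsZMatrix Q) :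
    ∃ s : ℝ, IsNonnegMatrix (s • 1 - Q) := by
  obtain ⟨s, hs⟩ := (Set.finite_range fun k => Q k k).bddAbove
  refine ⟨s, fun i j => ?_⟩
  rcases eq_or_ne i j with rfl | hij
  · simpa using hs (Set.mem_range_self i)
  · simpa [one_apply_ne hij] using hQ i j hij

namespace Matrix

theorem hasSum_exp_apply (A : Matrix ι ι ℝ) (i j : ι) :
    HasSum (fun n => (n !⁻¹ : ℝ) * (A ^ n) i j) (exp A i j) := by
  let : NormedRing (Matrix ι ι ℝ) := Matrix.linftyOpNormedRing
  let : NormedAlgebra ℝ (Matrix ι ι ℝ) := Matrix.linftyOpNormedAlgebra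
  exact Pi.hasSum.mp (Pi.hasSum.mp (exp_series_hasSum_exp' (𝕂 := ℝ) A) i) j

theorem exp_smul_one_add (c : ℝ) (A : Matrix ι ι ℝ) :
    exp (c • (1 : Matrix ι ι ℝ) + A) = Real.exp c • exp A := by
  rw [exp_add_of_commute _ _ ((Commute.one_left A).smul_left c), smul_one_eq_diagonal,
    exp_diagonal, Pi.exp_def, ← Real.exp_eq_exp_ℝ, ← smul_one_eq_diagonal, smul_one_mul]

end Matrix

theorem IsNonnegMatrix.pow_apply_eq_zero_of_exp_apply_eq_zero {M : Matrix ι ι ℝ}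
    (hM : IsNonnegMatrix M) {i j : ι} (h : exp M i j = 0) (n : ℕ) : (M ^ n) i j = 0 := by
  have hterm (m : ℕ) : 0 ≤ (m !⁻¹ : ℝ) * (M ^ m) i j :=
    mul_nonneg (by positivity) (hM.pow_s10 m i j)
  have hle := le_hasSum (h ▸ Matrix.hasSum_exp_apply M i j) n fun m _ => hterm m
  have hfac : (n !⁻¹ : ℝ) ≠ 0 := by positivity
  exact (mul_eq_zero.mp (le_antisymm hle (hterm n))).resolve_left hfac

theorem IsNonnegMatrix.exp_smul_apply_eq_zero {M : Matrix ι ι ℝ} (hM : IsNonnegMatrix M)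
    {i j : ι} (h : exp M i j = 0) (t : ℝ) : exp (t • M) i j = 0 := by
  refine (Matrix.hasSum_exp_apply (t • M) i j).unique ?_
  simp [smul_pow, hM.pow_apply_eq_zero_of_exp_apply_eq_zero h, hasSum_zero]

end

theorem stmt10_general (N : ℕ) (B Q : Matrix (Fin N) (Fin N) ℝ) (hQ : IsZMatrix Q)
    (hQB : NormedSpace.exp (-Q) = B)
    (i j : Fin N) (hB0 : B i j = 0) :
    ∀ t : ℝ, (NormedSpace.exp (-(t • Q))) i j = 0 := by
  obtain ⟨s, hM⟩ := hQ.exists_isNonnegMatrix_smul_one_sub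
  have hshift (u : ℝ) : exp (-(u • Q)) = Real.exp (-(u * s)) • exp (u • (s • 1 - Q)) := by
    rw [← Matrix.exp_smul_one_add]
    congr 1
    module
  have hM0 : exp (s • 1 - Q) i j = 0 := by
    simpa [hQB, hB0, (Real.exp_pos _).ne'] using congrFun₂ (hshift 1) i j
  intro t
  rw [hshift t, Matrix.smul_apply, hM.exp_smul_apply_eq_zero hM0 t, smul_zero]

theorem stmt10 (N : ℕ) (B Q : Matrix (Fin N) (Fin N) ℝ) (hBnn : IsNonnegMatrix B)
    (hBdiv : IsStronglyInfinitelyDivisible B) (hQ : IsZMatrix Q)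
    (hQB : NormedSpace.exp (-Q) = B)
    (i j : Fin N) (hij : i ≠ j) (hB0 : B i j = 0) :
    ∀ t : ℝ, (NormedSpace.exp (-(t • Q))) i j = 0 :=
  stmt10_general N B Q hQ hQB i j hB0
end
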